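/- Assume Ω is locally connected at the boundary, i.e. Ω is finitely connected at every x ∈ ∂Ω and lim_{r→0} N(r) = 1 at every x ∈ ∂Ω, where N(r) denotes the number of connected components of B(x, r) ∩ Ω having x in their closure. Then every prime chain {E_k} in Ω has impression {x} for some x ∈ ∂Ω, and there exist radii r_k > 0 such that B(x, r_k) ∩ Ω ⊆ E_k for all k. Moreover, for each x ∈ ∂Ω there exists a prime chain with impression {x}, and any two prime chains whose impressions contain x are equivalent. -/
import Mathlib


open Metric Set Filter Topology

/-- The distance between two subsets of a metric space
(infimum of pairwise distances, with `sInf ∅ = 0`). -/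
noncomputable def setDist {X : Type*} [MetricSpace X] (A B : Set X) : ℝ :=
  sInf {d : ℝ | ∃ a ∈ A, ∃ b ∈ B, d = dist a b}

/-- `Ω` is a bounded domain: bounded, nonempty, open, connected, and not all of `X`. -/
def BoundedDomain {X : Type*} [MetricSpace X] (Ω : Set X) : Prop :=
  IsOpen Ω ∧ IsConnected Ω ∧ Bornology.IsBounded Ω ∧ Ω ≠ Set.univ

/-- An acceptable set: a bounded connected set `E ⊊ Ω` whose closure meets `∂Ω`. -/
def Acceptable {X : Type*} [MetricSpace X] (Ω E : Set X) : Prop :=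
  Bornology.IsBounded E ∧ IsConnected E ∧ E ⊆ Ω ∧ E ≠ Ω ∧
    (closure E ∩ frontier Ω).Nonempty

/-- A chain in `Ω`: a nested sequence of acceptable sets whose consecutive
relative boundaries are at positive distance and whose impression
`⋂ k, closure (E k)` lies in `∂Ω`. -/
def IsChainIn {X : Type*} [MetricSpace X] (Ω : Set X) (E : ℕ → Set X) : Prop :=
  (∀ k, Acceptable Ω (E k)) ∧
  (∀ k, E (k + 1) ⊆ E k) ∧
  (∀ k, 0 < setDist (Ω ∩ frontier (E (k + 1))) (Ω ∩ frontier (E k))) ∧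
  (⋂ k, closure (E k)) ⊆ frontier Ω

/-- A chain `E` divides a chain `F` if each `F k` contains some `E l`. -/
def Divides {X : Type*} (E F : ℕ → Set X) : Prop := ∀ k, ∃ l, E l ⊆ F k

/-- Two chains are equivalent if each divides the other. -/
def EquivChains {X : Type*} (E F : ℕ → Set X) : Prop := Divides E F ∧ Divides F E

/-- A prime chain: a chain such that every chain dividing it is equivalent to it. -/
def IsPrimeChain {X : Type*} [MetricSpace X] (Ω : Set X) (E : ℕ → Set X) : Prop :=
  IsChainIn Ω E ∧ ∀ F : ℕ → Set X, IsChainIn Ω F → Divides F E → EquivChains F E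

/-- A boundary point `x` is accessible if some curve in `Ω` ends at `x`. -/
def Accessible {X : Type*} [MetricSpace X] (Ω : Set X) (x : X) : Prop :=
  ∃ γ : ℝ → X, ContinuousOn γ (Set.Icc 0 1) ∧ γ 1 = x ∧ γ '' Set.Ico 0 1 ⊆ Ω

/-- `Ω` is finitely connected at `x₀` if each ball around `x₀` contains an open
neighborhood `G` of `x₀` such that `G ∩ Ω` has finitely many components. -/
def FinitelyConnectedAt {X : Type*} [MetricSpace X] (Ω : Set X) (x₀ : X) : Prop :=
  ∀ r : ℝ, 0 < r → ∃ G : Set X, IsOpen G ∧ x₀ ∈ G ∧ G ⊆ Metric.ball x₀ r ∧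
    {C : Set X | ∃ y ∈ G ∩ Ω, C = connectedComponentIn (G ∩ Ω) y}.Finite

/-- The components of `B(x₀, r) ∩ Ω` having `x₀` in their closure. -/
def boundaryComponentsAt {X : Type*} [MetricSpace X] (Ω : Set X) (x₀ : X) (r : ℝ) :
    Set (Set X) :=
  {G | (∃ y ∈ Metric.ball x₀ r ∩ Ω,
      G = connectedComponentIn (Metric.ball x₀ r ∩ Ω) y) ∧ x₀ ∈ closure G}

/-! ### Auxiliary lemmas -/

section Aux

variable {X : Type*} [MetricSpace X]

lemma preconn_frontier {s t : Set X} (hs : IsPreconnected s)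
    (h1 : (s ∩ t).Nonempty) (h2 : (s \ t).Nonempty) : (s ∩ frontier t).Nonempty := by
  by_contra hno
  rw [Set.not_nonempty_iff_eq_empty] at hno
  have hmem : ∀ z ∈ s, z ∉ frontier t := by
    intro z hz hf
    exact absurd (Set.mem_inter hz hf) (by rw [hno]; exact Set.notMem_empty z)
  have hsub : s ⊆ interior t ∪ (closure t)ᶜ := by
    intro z hz
    rcases Classical.em (z ∈ closure t) with hc | hc
    · left
      by_contra hi
      exact hmem z hz ⟨hc, hi⟩
    · right; exact hc
  have hu : (s ∩ interior t).Nonempty := by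
    obtain ⟨a, haS, haT⟩ := h1
    refine ⟨a, haS, ?_⟩
    rcases hsub haS with h | h
    · exact h
    · exact absurd (subset_closure haT) h
  have hv : (s ∩ (closure t)ᶜ).Nonempty := by
    obtain ⟨b, hbS, hbT⟩ := h2
    refine ⟨b, hbS, ?_⟩
    rcases hsub hbS with h | h
    · exact absurd (interior_subset h) hbT
    · exact h
  obtain ⟨c, -, hci, hcc⟩ := hs (interior t) (closure t)ᶜ isOpen_interior
    isClosed_closure.isOpen_compl hsub hu hv
  exact hcc (subset_closure (interior_subset hci))

lemma setDist_le {A B : Set X} {a b : X} (ha : a ∈ A) (hb : b ∈ B) :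
    setDist A B ≤ dist a b := by
  apply csInf_le
  · refine ⟨0, ?_⟩
    rintro d ⟨a', -, b', -, rfl⟩
    exact dist_nonneg
  · exact ⟨a, ha, b, hb, rfl⟩

lemma setDist_pos_of {A B : Set X} (hA : A.Nonempty) (hB : B.Nonempty) {c : ℝ}
    (hc : 0 < c) (h : ∀ a ∈ A, ∀ b ∈ B, c ≤ dist a b) : 0 < setDist A B := by
  refine lt_of_lt_of_le hc (le_csInf ?_ ?_)
  · obtain ⟨a, ha⟩ := hA; obtain ⟨b, hb⟩ := hB
    exact ⟨dist a b, a, ha, b, hb, rfl⟩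
  · rintro d ⟨a, ha, b, hb, rfl⟩
    exact h a ha b hb

lemma divides_trans {E F G : ℕ → Set X} (h1 : Divides E F) (h2 : Divides F G) :
    Divides E G := by
  intro k
  obtain ⟨l, hl⟩ := h2 k
  obtain ⟨m, hm⟩ := h1 l
  exact ⟨m, hm.trans hl⟩

lemma divides_refl (E : ℕ → Set X) : Divides E E := fun k => ⟨k, subset_rfl⟩

lemma impression_nonempty [ProperSpace X] {Ω : Set X} {E : ℕ → Set X}
    (hE : IsChainIn Ω E) : (⋂ k, closure (E k)).Nonempty :=
  IsCompact.nonempty_iInter_of_sequence_nonempty_isCompact_isClosed _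
    (fun k => closure_mono (hE.2.1 k)) (fun k => (hE.1 k).2.1.nonempty.closure)
    (hE.1 0).1.isCompact_closure (fun _ => isClosed_closure)

/-- Properties of members of `boundaryComponentsAt`. -/
lemma bca_props {Ω : Set X} {x : X} {r : ℝ} {C : Set X}
    (hC : C ∈ boundaryComponentsAt Ω x r) :
    C ⊆ ball x r ∩ Ω ∧ C.Nonempty ∧ IsPreconnected C ∧ x ∈ closure C := by
  obtain ⟨⟨y, hy, rfl⟩, hxcl⟩ := hC
  exact ⟨connectedComponentIn_subset _ _, ⟨y, mem_connectedComponentIn hy⟩,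
    isPreconnected_connectedComponentIn, hxcl⟩

lemma bca_mem_of_eq {Ω : Set X} {x : X} {r : ℝ} {C : Set X}
    (h : boundaryComponentsAt Ω x r = {C}) : C ∈ boundaryComponentsAt Ω x r := by
  rw [h]; exact Set.mem_singleton _

variable [LocallyConnectedSpace X]

lemma bca_open {Ω : Set X} (hΩo : IsOpen Ω) {x : X} {r : ℝ} {C : Set X}
    (hC : C ∈ boundaryComponentsAt Ω x r) : IsOpen C := by
  obtain ⟨⟨y, hy, rfl⟩, -⟩ := hC
  exact (isOpen_ball.inter hΩo).connectedComponentIn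

/-- Any preconnected nonempty subset of `B(x,r) ∩ Ω` with `x` in its closure
is contained in the unique boundary component. -/
lemma subset_of_unique {Ω : Set X} {x : X} {r : ℝ} {C s : Set X}
    (h : boundaryComponentsAt Ω x r = {C}) (hs : IsPreconnected s) (hne : s.Nonempty)
    (hsub : s ⊆ ball x r ∩ Ω) (hxcl : x ∈ closure s) : s ⊆ C := by
  obtain ⟨y, hy⟩ := hne
  have h1 : s ⊆ connectedComponentIn (ball x r ∩ Ω) y :=
    hs.subset_connectedComponentIn hy hsub
  have h3 : connectedComponentIn (ball x r ∩ Ω) y ∈ boundaryComponentsAt Ω x r :=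
    ⟨⟨y, hsub hy, rfl⟩, closure_mono h1 hxcl⟩
  rw [h, Set.mem_singleton_iff] at h3
  exact h3 ▸ h1

lemma bca_mono {Ω : Set X} {x : X} {s r : ℝ} {Cs Cr : Set X}
    (hs : boundaryComponentsAt Ω x s = {Cs}) (hr : boundaryComponentsAt Ω x r = {Cr})
    (hsr : s ≤ r) : Cs ⊆ Cr := by
  obtain ⟨hsub, hne, hpc, hxcl⟩ := bca_props (bca_mem_of_eq hs)
  exact subset_of_unique hr hpc hne
    (hsub.trans (Set.inter_subset_inter_left _ (ball_subset_ball hsr))) hxcl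

/-- Points of `Ω` on the frontier of the unique boundary component lie on the sphere. -/
lemma bca_frontier_sphere {Ω : Set X} (hΩo : IsOpen Ω) {x : X} {r : ℝ} {C : Set X}
    (h : boundaryComponentsAt Ω x r = {C}) :
    ∀ z ∈ Ω ∩ frontier C, dist z x = r := by
  rintro z ⟨hzΩ, hzf⟩
  have hCmem := bca_mem_of_eq h
  obtain ⟨hsub, hne, hpc, hxcl⟩ := bca_props hCmem
  have hCo : IsOpen C := bca_open hΩo hCmem
  have hzc : z ∈ closure C := frontier_subset_closure hzf
  have hle : dist z x ≤ r := by
    have : z ∈ closure (ball x r) :=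
      closure_mono (hsub.trans Set.inter_subset_left) hzc
    simpa [mem_closedBall] using closure_ball_subset_closedBall this
  rcases lt_or_eq_of_le hle with hlt | heq
  · exfalso
    have hzB : z ∈ ball x r ∩ Ω := ⟨mem_ball.mpr hlt, hzΩ⟩
    have hz_notC : z ∉ C := by
      rw [hCo.frontier_eq] at hzf
      exact hzf.2
    -- the component of z is an open neighborhood of z, hence meets C
    have hC'o : IsOpen (connectedComponentIn (ball x r ∩ Ω) z) :=
      (isOpen_ball.inter hΩo).connectedComponentIn
    have hzC' : z ∈ connectedComponentIn (ball x r ∩ Ω) z :=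
      mem_connectedComponentIn hzB
    obtain ⟨w, hwC', hwC⟩ := (_root_.mem_closure_iff.mp hzc) _ hC'o hzC'
    -- so the components coincide
    obtain ⟨⟨y, hy, hCdef⟩, -⟩ := hCmem
    have e1 : connectedComponentIn (ball x r ∩ Ω) z
        = connectedComponentIn (ball x r ∩ Ω) w := connectedComponentIn_eq hwC'
    have e2 : C = connectedComponentIn (ball x r ∩ Ω) w := by
      rw [hCdef] at hwC ⊢
      exact connectedComponentIn_eq hwC
    exact hz_notC (by rw [e2, ← e1]; exact hzC')
  · exact heq

lemma bca_frontier_nonempty {Ω : Set X} (hΩc : IsPreconnected Ω) {x : X} {r : ℝ}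
    {C : Set X} (h : boundaryComponentsAt Ω x r = {C}) {p : X} (hp : p ∈ Ω)
    (hpC : p ∉ C) : (Ω ∩ frontier C).Nonempty := by
  obtain ⟨hsub, hne, -, -⟩ := bca_props (bca_mem_of_eq h)
  obtain ⟨y, hy⟩ := hne
  exact preconn_frontier hΩc ⟨y, (hsub hy).2, hy⟩ ⟨p, hp, hpC⟩

/-- Small balls around `x` intersected with `Ω` are inside the unique boundary
component, by finite connectivity. -/
lemma small_ball_subset {Ω : Set X} (hΩo : IsOpen Ω) {x : X}
    (hfcx : FinitelyConnectedAt Ω x) {r : ℝ} (hr : 0 < r) {C : Set X}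
    (h : boundaryComponentsAt Ω x r = {C}) :
    ∃ r' > 0, r' ≤ r ∧ ball x r' ∩ Ω ⊆ C := by
  obtain ⟨G, hGo, hxG, hGsub, hfin⟩ := hfcx r hr
  set 𝒮 : Set (Set X) :=
    {D | (∃ y ∈ G ∩ Ω, D = connectedComponentIn (G ∩ Ω) y) ∧ x ∉ closure D} with h𝒮
  have h𝒮fin : 𝒮.Finite := hfin.subset (fun D hD => hD.1)
  have hxU : x ∉ closure (⋃ D ∈ 𝒮, D) := by
    rw [h𝒮fin.closure_biUnion]
    simp only [Set.mem_iUnion]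
    rintro ⟨D, hD, hxD⟩
    exact hD.2 hxD
  obtain ⟨ε₁, hε₁, hball₁⟩ := Metric.isOpen_iff.mp isClosed_closure.isOpen_compl x hxU
  obtain ⟨ε₂, hε₂, hball₂⟩ := Metric.isOpen_iff.mp hGo x hxG
  refine ⟨min (min ε₁ ε₂) r, by positivity, min_le_right _ _, ?_⟩
  rintro y ⟨hyb, hyΩ⟩
  have hyb' : y ∈ ball x (min ε₁ ε₂) := mem_ball.mpr (lt_of_lt_of_le (mem_ball.mp hyb) (min_le_left _ _))
  have hyG : y ∈ G := hball₂ (mem_ball.mpr (lt_of_lt_of_le (mem_ball.mp hyb') (min_le_right _ _)))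
  set D := connectedComponentIn (G ∩ Ω) y with hD
  have hyD : y ∈ D := mem_connectedComponentIn ⟨hyG, hyΩ⟩
  have hxD : x ∈ closure D := by
    by_contra hxD
    have hDS : D ∈ 𝒮 := ⟨⟨y, ⟨hyG, hyΩ⟩, rfl⟩, hxD⟩
    have : y ∈ closure (⋃ D ∈ 𝒮, D) :=
      subset_closure (Set.mem_biUnion hDS hyD)
    exact (hball₁ (mem_ball.mpr (lt_of_lt_of_le (mem_ball.mp hyb') (min_le_left _ _)))) this
  have hDsub : D ⊆ ball x r ∩ Ω :=
    (connectedComponentIn_subset _ _).trans (Set.inter_subset_inter_left _ hGsub)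
  exact subset_of_unique h isPreconnected_connectedComponentIn ⟨y, hyD⟩ hDsub hxD hyD

/-- Key lemma: for any chain with `x` in its impression, small boundary components
are contained in the chain's sets. -/
lemma comp_subset_chain {Ω : Set X} (hΩo : IsOpen Ω) {x : X}
    (hfcx : FinitelyConnectedAt Ω x) {r₀ : ℝ} (hr₀p : 0 < r₀)
    (hr₀ : ∀ r, 0 < r → r ≤ r₀ → ∃ C, boundaryComponentsAt Ω x r = {C})
    {E : ℕ → Set X} (hE : IsChainIn Ω E) (hxE : x ∈ ⋂ k, closure (E k)) (k : ℕ) :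
    ∃ r, 0 < r ∧ r ≤ r₀ ∧ ∀ C, boundaryComponentsAt Ω x r = {C} → C ⊆ E k := by
  set δ := setDist (Ω ∩ frontier (E (k + 1))) (Ω ∩ frontier (E k)) with hδdef
  have hδ : 0 < δ := hE.2.2.1 k
  set r := min r₀ (δ / 3) with hrdef
  have hrpos : 0 < r := lt_min hr₀p (by positivity)
  have hrr₀ : r ≤ r₀ := min_le_left _ _
  refine ⟨r, hrpos, hrr₀, ?_⟩
  obtain ⟨C, hC⟩ := hr₀ r hrpos hrr₀
  -- it suffices to treat this C
  suffices hCE : C ⊆ E k by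
    intro C' hC'
    have : C' = C := by
      have := hC.symm.trans hC'
      exact (Set.singleton_eq_singleton_iff.mp this).symm
    rwa [this]
  obtain ⟨hsub, hne, hpc, -⟩ := bca_props (bca_mem_of_eq hC)
  obtain ⟨r', hr'pos, hr'r, hball⟩ := small_ball_subset hΩo hfcx hrpos hC
  -- C meets E (k+1)
  have hxcl : x ∈ closure (E (k + 1)) := by
    simp only [Set.mem_iInter] at hxE; exact hxE (k + 1)
  obtain ⟨y, hyE, hyd⟩ := Metric.mem_closure_iff.mp hxcl r' hr'pos
  have hyΩ : y ∈ Ω := (hE.1 (k + 1)).2.2.1 hyE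
  have hyC : y ∈ C := hball ⟨mem_ball.mpr (by rw [dist_comm]; exact hyd), hyΩ⟩
  by_contra hnot
  -- C meets E k and its complement, so meets Ω ∩ frontier (E k)
  obtain ⟨z, hzC, hzf⟩ := preconn_frontier hpc ⟨y, hyC, hE.2.1 k hyE⟩
    ((Set.not_subset.mp hnot).imp (fun z hz => ⟨hz.1, hz.2⟩))
  have hzΩ : z ∈ Ω := (hsub hzC).2
  -- C is not contained in E (k+1) either
  have hnot' : ¬ C ⊆ E (k + 1) := fun hsub' => hnot (hsub'.trans (hE.2.1 k))
  obtain ⟨z', hz'C, hz'f⟩ := preconn_frontier hpc ⟨y, hyC, hyE⟩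
    ((Set.not_subset.mp hnot').imp (fun w hw => ⟨hw.1, hw.2⟩))
  have hz'Ω : z' ∈ Ω := (hsub hz'C).2
  have hδle : δ ≤ dist z' z := setDist_le ⟨hz'Ω, hz'f⟩ ⟨hzΩ, hzf⟩
  have h1 : dist z' x < r := mem_ball.mp (hsub hz'C).1
  have h2 : dist z x < r := mem_ball.mp (hsub hzC).1
  have h3 : dist z' z ≤ dist z' x + dist x z := dist_triangle _ _ _
  rw [dist_comm x z] at h3
  have hr3 : r ≤ δ / 3 := min_le_right _ _
  linarith

end Aux

/-! ### Main construction -/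

section Main

variable {X : Type*} [MetricSpace X] [ProperSpace X] [LocallyConnectedSpace X]

lemma impression_subset_singleton {F C : ℕ → Set X} {x : X} {rs : ℕ → ℝ}
    (hCk : ∀ k, C k ⊆ ball x (rs k)) (hrs : ∀ ε > 0, ∃ k, rs k < ε)
    (hdiv : Divides F C) : (⋂ k, closure (F k)) ⊆ {x} := by
  intro z hz
  simp only [Set.mem_iInter] at hz
  have key : ∀ ε > 0, dist z x < ε := by
    intro ε hε
    obtain ⟨k, hk⟩ := hrs ε hε
    obtain ⟨l, hl⟩ := hdiv k
    have h1 : z ∈ closure (C k) := closure_mono hl (hz l)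
    have h2 : z ∈ closedBall x (rs k) :=
      closure_ball_subset_closedBall (closure_mono (hCk k) h1)
    exact lt_of_le_of_lt (mem_closedBall.mp h2) hk
  have hzx : dist z x ≤ 0 := by
    by_contra hpos
    push_neg at hpos
    exact absurd (key _ hpos) (lt_irrefl _)
  exact Set.mem_singleton_iff.mpr (dist_le_zero.mp hzx)

lemma exists_good_chain {Ω : Set X} (hΩ : BoundedDomain Ω) {x : X} (hx : x ∈ frontier Ω)
    (hfcx : FinitelyConnectedAt Ω x) {r₀ : ℝ} (hr₀p : 0 < r₀)
    (hr₀ : ∀ r, 0 < r → r ≤ r₀ → ∃ C, boundaryComponentsAt Ω x r = {C}) :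
    ∃ C : ℕ → Set X, IsChainIn Ω C ∧ (⋂ k, closure (C k)) = {x} ∧
      (∀ k, ∃ r' > 0, ball x r' ∩ Ω ⊆ C k) ∧
      (∀ E, IsChainIn Ω E → x ∈ ⋂ k, closure (E k) → Divides C E) ∧
      (∀ F : ℕ → Set X, Divides F C → (⋂ k, closure (F k)) ⊆ {x}) := by
  obtain ⟨hΩo, hΩc, hΩb, hΩne⟩ := hΩ
  obtain ⟨p, hp⟩ := hΩc.nonempty
  have hxΩ : x ∉ Ω := by
    intro hxin
    have h := hΩo.inter_frontier_eq
    exact absurd (Set.mem_inter hxin hx) (by rw [h]; exact Set.notMem_empty x)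
  have hdp : 0 < dist x p := dist_pos.mpr (fun he => hxΩ (he ▸ hp))
  set R := min r₀ (dist x p) with hR
  have hRpos : 0 < R := lt_min hr₀p hdp
  set rs : ℕ → ℝ := fun k => R / (k + 1) with hrs
  have hrspos : ∀ k, 0 < rs k := fun k => div_pos hRpos (by positivity)
  have hrsleR : ∀ k, rs k ≤ R := by
    intro k
    apply div_le_self hRpos.le
    have := Nat.cast_nonneg (α := ℝ) k
    linarith
  have hrsle : ∀ k, rs k ≤ r₀ := fun k => (hrsleR k).trans (min_le_left _ _)
  have hrsdec : ∀ k, rs (k + 1) < rs k := by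
    intro k
    simp only [hrs]
    apply div_lt_div_of_pos_left hRpos (by positivity)
    push_cast; linarith
  have hrssmall : ∀ ε > 0, ∃ k, rs k < ε := by
    intro ε hε
    obtain ⟨n, hn⟩ := exists_nat_gt (R / ε)
    refine ⟨n, ?_⟩
    simp only [hrs]
    rw [div_lt_iff₀ (by positivity)]
    rw [div_lt_iff₀ hε] at hn
    nlinarith [Nat.cast_nonneg (α := ℝ) n]
  choose C hC using fun k => hr₀ (rs k) (hrspos k) (hrsle k)
  have hprops := fun k => bca_props (bca_mem_of_eq (hC k))
  have hpnot : ∀ k, p ∉ C k := by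
    intro k hpk
    have h1 : dist p x < rs k := mem_ball.mp ((hprops k).1 hpk).1
    have h2 : rs k ≤ dist x p := (hrsleR k).trans (min_le_right _ _)
    rw [dist_comm] at h1; linarith
  have hCsubΩ : ∀ k, C k ⊆ Ω := fun k => ((hprops k).1).trans Set.inter_subset_right
  have hCball : ∀ k, C k ⊆ ball x (rs k) := fun k => ((hprops k).1).trans Set.inter_subset_left
  have hnested : ∀ k, C (k + 1) ⊆ C k := fun k => bca_mono (hC (k + 1)) (hC k) (hrsdec k).le
  have himp : ∀ F : ℕ → Set X, Divides F C → (⋂ k, closure (F k)) ⊆ {x} :=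
    fun F hF => impression_subset_singleton hCball hrssmall hF
  have hchain : IsChainIn Ω C := by
    refine ⟨?_, hnested, ?_, ?_⟩
    · intro k
      refine ⟨hΩb.subset (hCsubΩ k), ⟨(hprops k).2.1, (hprops k).2.2.1⟩, hCsubΩ k, ?_,
        ⟨x, (hprops k).2.2.2, hx⟩⟩
      intro he
      exact hpnot k (he ▸ hp)
    · intro k
      have hA : (Ω ∩ frontier (C (k + 1))).Nonempty :=
        bca_frontier_nonempty hΩc.isPreconnected (hC (k + 1)) hp (hpnot (k + 1))
      have hB : (Ω ∩ frontier (C k)).Nonempty :=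
        bca_frontier_nonempty hΩc.isPreconnected (hC k) hp (hpnot k)
      refine setDist_pos_of hA hB (c := rs k - rs (k + 1)) (by linarith [hrsdec k]) ?_
      intro a ha b hb
      have hda : dist a x = rs (k + 1) := bca_frontier_sphere hΩo (hC (k + 1)) a ha
      have hdb : dist b x = rs k := bca_frontier_sphere hΩo (hC k) b hb
      have htr : dist b x ≤ dist b a + dist a x := dist_triangle b a x
      rw [hda, hdb, dist_comm b a] at htr
      linarith
    · exact (himp C (divides_refl C)).trans (Set.singleton_subset_iff.mpr hx)
  have himpeq : (⋂ k, closure (C k)) = {x} := by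
    apply Set.Subset.antisymm (himp C (divides_refl C))
    rw [Set.singleton_subset_iff, Set.mem_iInter]
    exact fun k => (hprops k).2.2.2
  have hdiv : ∀ E, IsChainIn Ω E → x ∈ ⋂ k, closure (E k) → Divides C E := by
    intro E hE hxE k
    obtain ⟨r, hrp, hrr₀, hr⟩ := comp_subset_chain hΩo hfcx hr₀p hr₀ hE hxE k
    obtain ⟨l, hl⟩ := hrssmall r hrp
    obtain ⟨C', hC'⟩ := hr₀ r hrp hrr₀
    exact ⟨l, (bca_mono (hC l) hC' hl.le).trans (hr C' hC')⟩
  have hballs : ∀ k, ∃ r' > 0, ball x r' ∩ Ω ⊆ C k := by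
    intro k
    obtain ⟨r', h1, _h2, h3⟩ := small_ball_subset hΩo hfcx (hrspos k) (hC k)
    exact ⟨r', h1, h3⟩
  exact ⟨C, hchain, himpeq, hballs, hdiv, himp⟩

end Main

/-- If `Ω` is locally connected at the boundary, then every prime chain has
impression `{x}` for some `x ∈ ∂Ω` and contains small balls around `x`
intersected with `Ω`; each boundary point is the impression of a prime chain,
and any two prime chains whose impressions contain `x` are equivalent. -/
theorem statement19 {X : Type*} [MetricSpace X] [ProperSpace X] [LocallyConnectedSpace X]
    (Ω : Set X) (hΩ : BoundedDomain Ω)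
    (hfc : ∀ x ∈ frontier Ω, FinitelyConnectedAt Ω x)
    (hN1 : ∀ x ∈ frontier Ω, ∃ r₀ > (0 : ℝ), ∀ r : ℝ, 0 < r → r ≤ r₀ →
      (boundaryComponentsAt Ω x r).Finite ∧
      (boundaryComponentsAt Ω x r).ncard = 1) :
    (∀ E : ℕ → Set X, IsPrimeChain Ω E →
      ∃ x ∈ frontier Ω, (⋂ k, closure (E k)) = {x} ∧
        ∃ rs : ℕ → ℝ, (∀ k, 0 < rs k) ∧
          ∀ k, Metric.ball x (rs k) ∩ Ω ⊆ E k) ∧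
    (∀ x ∈ frontier Ω,
      ∃ E : ℕ → Set X, IsPrimeChain Ω E ∧ (⋂ k, closure (E k)) = {x}) ∧
    (∀ x ∈ frontier Ω, ∀ E F : ℕ → Set X,
      IsPrimeChain Ω E → IsPrimeChain Ω F →
      x ∈ ⋂ k, closure (E k) → x ∈ ⋂ k, closure (F k) →
      EquivChains E F) := by
  have good : ∀ x ∈ frontier Ω, ∃ C : ℕ → Set X, IsChainIn Ω C ∧
      (⋂ k, closure (C k)) = {x} ∧
      (∀ k, ∃ r' > 0, ball x r' ∩ Ω ⊆ C k) ∧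
      (∀ E, IsChainIn Ω E → x ∈ ⋂ k, closure (E k) → Divides C E) ∧
      (∀ F : ℕ → Set X, Divides F C → (⋂ k, closure (F k)) ⊆ {x}) := by
    intro x hx
    obtain ⟨r₀, hr₀p, hspec⟩ := hN1 x hx
    exact exists_good_chain hΩ hx (hfc x hx) hr₀p
      (fun r h1 h2 => Set.ncard_eq_one.mp (hspec r h1 h2).2)
  have prime : ∀ x, ∀ C : ℕ → Set X, IsChainIn Ω C →
      (∀ E, IsChainIn Ω E → x ∈ ⋂ k, closure (E k) → Divides C E) →
      (∀ F : ℕ → Set X, Divides F C → (⋂ k, closure (F k)) ⊆ {x}) →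
      IsPrimeChain Ω C := by
    intro x C hchain hdiv himp
    refine ⟨hchain, ?_⟩
    intro F hF hFC
    have hne := impression_nonempty hF
    have hsub := himp F hFC
    have hxF : x ∈ ⋂ k, closure (F k) := by
      obtain ⟨z, hz⟩ := hne
      have hzx := hsub hz
      rwa [Set.mem_singleton_iff.mp hzx] at hz
    exact ⟨hFC, hdiv F hF hxF⟩
  refine ⟨?_, ?_, ?_⟩
  · intro E hE
    obtain ⟨x, hxE⟩ := impression_nonempty hE.1
    have hx : x ∈ frontier Ω := hE.1.2.2.2 hxE
    obtain ⟨C, hchain, himpeq, hballs, hdiv, himp⟩ := good x hx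
    have hCE : Divides C E := hdiv E hE.1 hxE
    have hequiv := hE.2 C hchain hCE
    have hEimp : (⋂ k, closure (E k)) = {x} :=
      Set.Subset.antisymm (himp E hequiv.2) (Set.singleton_subset_iff.mpr hxE)
    refine ⟨x, hx, hEimp, ?_⟩
    choose l hl using hCE
    choose rsf hrs1 hrs2 using fun k => hballs (l k)
    exact ⟨rsf, hrs1, fun k => (hrs2 k).trans (hl k)⟩
  · intro x hx
    obtain ⟨C, hchain, himpeq, hballs, hdiv, himp⟩ := good x hx
    exact ⟨C, prime x C hchain hdiv himp, himpeq⟩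
  · intro x hx E F hE hF hxE hxF
    obtain ⟨C, hchain, himpeq, hballs, hdiv, himp⟩ := good x hx
    have h1 := hE.2 C hchain (hdiv E hE.1 hxE)
    have h2 := hF.2 C hchain (hdiv F hF.1 hxF)
    exact ⟨divides_trans h1.2 h2.1, divides_trans h2.2 h1.1⟩
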